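/- Let T be a nonempty well-founded tree, B : E → F an operator between Banach spaces, D a directed set, γ > 0, (e_t)_{t ∈ T.D} ⊆ B_E a weakly null collection, K ⊆ F* weak*-compact, and (f*_t)_{t ∈ MAX(T.D)} ⊆ K such that Re f*_t(Be_s) ≥ γ for all ∅ < s ≤ t ∈ MAX(T.D). Then for every 0 < γ' < γ, ⟨K⟩_{B,γ'}^{o(T)} ≠ ∅. -/

import Mathlib

open Ordinal Filter

namespace PaperAUS

/-- A tree on `Λ`: a set of nonempty finite sequences closed under nonempty initial segments. -/
def IsTree {Λ : Type*} (T : Set (List Λ)) : Prop :=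
  [] ∉ T ∧ ∀ s t : List Λ, t ∈ T → s <+: t → s ≠ [] → s ∈ T

/-- The maximal nodes of `T`: those with no proper extension in `T`. -/
def maxNodes {Λ : Type*} (T : Set (List Λ)) : Set (List Λ) :=
  {t ∈ T | ∀ s ∈ T, t <+: s → s = t}

/-- Transfinite derivatives of a tree, removing maximal nodes at each step. -/
noncomputable def derivIter {Λ : Type*} (T : Set (List Λ)) (ξ : Ordinal) : Set (List Λ) :=
  Ordinal.limitRecOn ξ T (fun _ ih => ih \ maxNodes ih)
    (fun o _ ih => ⋂ ζ : Set.Iio o, ih ζ ζ.2)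

/-- The rank `o(T)` of a (well-founded) tree: least `ξ` with `T^ξ = ∅`. -/
noncomputable def treeRank {Λ : Type*} (T : Set (List Λ)) : Ordinal :=
  sInf {ξ | derivIter T ξ = ∅}

/-- `T.D`: the tree of sequences of pairs whose first coordinates form a member of `T`. -/
def TD {Λ : Type*} (T : Set (List Λ)) (D : Type*) : Set (List (Λ × D)) :=
  {l | l.map Prod.fst ∈ T}

/-- `r` is (the order of) a directed set. -/
def IsDirSys {D : Type*} (r : D → D → Prop) : Prop :=
  (∀ a, r a a) ∧ (∀ a b c, r a b → r b c → r a c) ∧ ∀ a b, ∃ c, r a c ∧ r b c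

/-- The filter of eventual sections of a directed order, used to express convergence of nets. -/
def netFilter {D : Type*} (r : D → D → Prop) : Filter D :=
  ⨅ a, Filter.principal {b | r a b}

/-- A collection `(x_t)_{t ∈ T.D}` is weakly null: along every family of immediate successor
nodes, the corresponding net is weakly null. -/
def WeaklyNullColl {Λ D : Type*} {X : Type*} [NormedAddCommGroup X] [NormedSpace ℝ X]
    (T : Set (List Λ)) (r : D → D → Prop) (x : List (Λ × D) → X) : Prop :=
  ∀ (t : List (Λ × D)) (ζ : Λ), (∀ u : D, t ++ [(ζ, u)] ∈ TD T D) →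
    ∀ f : X →L[ℝ] ℝ, Tendsto (fun u : D => f (x (t ++ [(ζ, u)]))) (netFilter r) (nhds 0)

/-- The set `{x_s : ∅ < s ≤ t}` of members of the collection along the branch below `t`. -/
def branchSet {Λ D : Type*} {X : Type*} (x : List (Λ × D) → X) (t : List (Λ × D)) : Set X :=
  {v | ∃ s, s ≠ [] ∧ s <+: t ∧ v = x s}

/-- The `ξ`-asymptotic smoothness modulus `ϱ_ξ(σ, A)` of an operator. -/
noncomputable def rho {X Y : Type*} [NormedAddCommGroup X] [NormedSpace ℝ X]
    [NormedAddCommGroup Y] [NormedSpace ℝ Y] (ξ : Ordinal) (A : X →L[ℝ] Y) (σ : ℝ) : ℝ :=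
  sSup {ρ : ℝ | ∃ (Λ D : Type) (r : D → D → Prop) (T : Set (List Λ))
    (y : Y) (x : List (Λ × D) → X),
    Nonempty D ∧ IsDirSys r ∧ IsTree T ∧ treeRank T = omega0 ^ ξ ∧
    ‖y‖ ≤ 1 ∧ (∀ t ∈ TD T D, ‖x t‖ ≤ σ) ∧ WeaklyNullColl T r x ∧
    ρ = sInf {c : ℝ | ∃ t ∈ TD T D, ∃ v ∈ convexHull ℝ (branchSet x t), c = ‖y + A v‖ - 1}}

end PaperAUS
open Ordinal
namespace PaperAUS

/-- Szlenk derivation: points of `K` every weak*-neighborhood of which has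
norm-diameter greater than `ε`. -/
def szDeriv {X : Type*} [NormedAddCommGroup X] [NormedSpace ℝ X]
    (K : Set (WeakDual ℝ X)) (ε : ℝ) : Set (WeakDual ℝ X) :=
  {x ∈ K | ∀ V ∈ nhds x, ∃ y ∈ V ∩ K, ∃ z ∈ V ∩ K,
    ε < ‖WeakDual.toStrongDual y - WeakDual.toStrongDual z‖}

/-- The `B`-relative Szlenk-type derivation `⟨K⟩_{B,ε}`. -/
def szDerivB {E F : Type*} [NormedAddCommGroup E] [NormedSpace ℝ E]
    [NormedAddCommGroup F] [NormedSpace ℝ F] (B : E →L[ℝ] F)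
    (K : Set (WeakDual ℝ F)) (ε : ℝ) : Set (WeakDual ℝ F) :=
  {f ∈ K | ∀ V ∈ nhds f, ∃ g ∈ V ∩ K, ∃ h ∈ V ∩ K,
    ε < ‖(WeakDual.toStrongDual g).comp B - (WeakDual.toStrongDual h).comp B‖}

/-- Transfinite iterates `⟨K⟩_{B,ε}^ξ`. -/
noncomputable def szDerivBIter {E F : Type*} [NormedAddCommGroup E] [NormedSpace ℝ E]
    [NormedAddCommGroup F] [NormedSpace ℝ F] (B : E →L[ℝ] F)
    (K : Set (WeakDual ℝ F)) (ε : ℝ) (ξ : Ordinal) : Set (WeakDual ℝ F) :=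
  Ordinal.limitRecOn ξ K (fun _ ih => szDerivB B ih ε)
    (fun o _ ih => ⋂ ζ : Set.Iio o, ih ζ ζ.2)

end PaperAUS
namespace PaperAUS

/-!
Write `F_s` for the set of functionals `f_t` with `t` a maximal node of `T.D` extending `s`.
By transfinite induction, `closure F_s` meets `⟨K⟩^ξ` as soon as the projection of `s` to `T`
has a child in every derived tree `T^ζ`, `ζ < ξ`; for the root this holds with `ξ = o(T)`.
At a successor `ξ = η + 1` pick a child `c` and, for each `u ∈ D`, some
`g_u ∈ closure F_{s⌢(c,u)} ∩ ⟨K⟩^η`, and let `g` be a weak*-cluster point of the net `(g_u)`.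
Then `g_u(B e_{s⌢(c,u)}) ≥ γ`, while `g(B e_{s⌢(c,u)}) → 0` because the collection is weakly
null, so every weak*-neighbourhood of `g` contains some `g_u` with `‖(g_u - g) ∘ B‖ > γ'`,
which puts `g` in `⟨⟨K⟩^η⟩_{B,γ'}`. Limit stages follow from compactness of `K`.
-/

open Topology

section TransfiniteIter

universe u

variable {α : Type*}

-- `derivIter` and `szDerivBIter` are, definitionally, instances of this iteration.
noncomputable def transfiniteIter (d : Set α → Set α) (S : Set α) (ξ : Ordinal) : Set α :=
  Ordinal.limitRecOn ξ S (fun _ ih => d ih) (fun o _ ih => ⋂ ζ : Set.Iio o, ih ζ ζ.2)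

variable (d : Set α → Set α) (S : Set α)

theorem transfiniteIter_zero : transfiniteIter d S 0 = S :=
  Ordinal.limitRecOn_zero ..

theorem transfiniteIter_add_one (ξ : Ordinal) :
    transfiniteIter d S (ξ + 1) = d (transfiniteIter d S ξ) :=
  Ordinal.limitRecOn_add_one ..

theorem transfiniteIter_limit {o : Ordinal} (ho : Order.IsSuccLimit o) :
    transfiniteIter d S o = ⋂ ζ : Set.Iio o, transfiniteIter d S ζ :=
  Ordinal.limitRecOn_limit _ _ _ _ ho

theorem transfiniteIter_induction {P : Set α → Prop} (h0 : P S) (hd : ∀ A, P A → P (d A))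
    (hI : ∀ (o : Ordinal.{u}) (A : Set.Iio o → Set α), (∀ i, P (A i)) → P (⋂ i, A i))
    (ξ : Ordinal.{u}) : P (transfiniteIter d S ξ) := by
  induction ξ using Ordinal.limitRecOn with
  | zero => rwa [transfiniteIter_zero]
  | add_one η ih => rw [transfiniteIter_add_one]; exact hd _ ih
  | limit o ho ih => rw [transfiniteIter_limit d S ho]; exact hI o _ fun i => ih i i.2

variable {d}

theorem transfiniteIter_anti (hd : ∀ A, d A ⊆ A) {ζ ξ : Ordinal} (h : ζ ≤ ξ) :
    transfiniteIter d S ξ ⊆ transfiniteIter d S ζ := by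
  induction ξ using Ordinal.limitRecOn with
  | zero => rw [nonpos_iff_eq_zero.mp h]
  | add_one η ih =>
    rcases h.eq_or_lt with rfl | h
    · rfl
    · rw [transfiniteIter_add_one]; exact (hd _).trans (ih (Order.lt_add_one_iff.mp h))
  | limit o ho _ =>
    rcases h.eq_or_lt with rfl | h
    · rfl
    · rw [transfiniteIter_limit d S ho]
      exact Set.iInter_subset (fun i : Set.Iio o => transfiniteIter d S i) ⟨ζ, h⟩

theorem transfiniteIter_subset (hd : ∀ A, d A ⊆ A) (ξ : Ordinal) : transfiniteIter d S ξ ⊆ S := by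
  simpa only [transfiniteIter_zero] using transfiniteIter_anti S hd (zero_le : 0 ≤ ξ)

end TransfiniteIter

section Trees

variable {Λ : Type*} {T : Set (List Λ)}

def PrefixClosed (S : Set (List Λ)) : Prop :=
  ∀ s t : List Λ, t ∈ S → s <+: t → s ≠ [] → s ∈ S

theorem derivIter_zero (T : Set (List Λ)) : derivIter T 0 = T :=
  transfiniteIter_zero _ _

theorem derivIter_add_one (T : Set (List Λ)) (ξ : Ordinal) :
    derivIter T (ξ + 1) = derivIter T ξ \ maxNodes (derivIter T ξ) :=
  transfiniteIter_add_one _ _ _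

theorem derivIter_limit (T : Set (List Λ)) {o : Ordinal} (ho : Order.IsSuccLimit o) :
    derivIter T o = ⋂ ζ : Set.Iio o, derivIter T ζ :=
  transfiniteIter_limit _ _ ho

theorem derivIter_anti (T : Set (List Λ)) {ζ ξ : Ordinal} (h : ζ ≤ ξ) :
    derivIter T ξ ⊆ derivIter T ζ :=
  transfiniteIter_anti T (fun _ => Set.sdiff_subset) h

theorem derivIter_subset (T : Set (List Λ)) (ξ : Ordinal) : derivIter T ξ ⊆ T :=
  transfiniteIter_subset T (fun _ => Set.sdiff_subset) ξ

theorem PrefixClosed.diff_maxNodes {S : Set (List Λ)} (hS : PrefixClosed S) :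
    PrefixClosed (S \ maxNodes S) := by
  intro s t ht hst hs
  refine ⟨hS s t ht.1 hst hs, fun hmax => ht.2 ?_⟩
  rwa [hmax.2 t ht.1 hst]

theorem prefixClosed_derivIter (hT : PrefixClosed T) (ξ : Ordinal) :
    PrefixClosed (derivIter T ξ) :=
  transfiniteIter_induction _ T hT (fun _ hA => hA.diff_maxNodes)
    (fun _ _ hA s t ht hst hs => Set.mem_iInter.mpr fun i =>
      hA i s t (Set.mem_iInter.mp ht i) hst hs) ξ

theorem PrefixClosed.exists_append_singleton_mem {S : Set (List Λ)} (hS : PrefixClosed S)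
    {w v : List Λ} (hv : v ∈ S) (hwv : w <+: v) (hne : w ≠ v) : ∃ c, w ++ [c] ∈ S := by
  obtain ⟨_ | ⟨c, rest⟩, rfl⟩ := hwv
  · simp at hne
  · exact ⟨c, hS _ _ hv ⟨rest, by simp⟩ (by simp)⟩

theorem PrefixClosed.exists_append_singleton_mem_derivIter (hT : PrefixClosed T)
    {w : List Λ} {ζ η : Ordinal} (hw : w ∈ derivIter T η) (hζ : ζ < η) :
    ∃ c, w ++ [c] ∈ derivIter T ζ := by
  have hw' : w ∈ derivIter T ζ \ maxNodes (derivIter T ζ) := by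
    rw [← derivIter_add_one]; exact derivIter_anti T (Order.add_one_le_of_lt hζ) hw
  have : ¬ ∀ v ∈ derivIter T ζ, w <+: v → v = w := fun h => hw'.2 ⟨hw'.1, h⟩
  push Not at this
  obtain ⟨v, hv, hwv, hvw⟩ := this
  exact (prefixClosed_derivIter hT ζ).exists_append_singleton_mem hv hwv hvw.symm

theorem derivIter_nonempty_of_lt_treeRank {ζ : Ordinal} (h : ζ < treeRank T) :
    (derivIter T ζ).Nonempty := by
  rw [Set.nonempty_iff_ne_empty]
  intro hζ
  exact (csInf_le' (s := {ξ | derivIter T ξ = ∅}) hζ).not_gt h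

theorem IsTree.exists_singleton_mem_derivIter (hT : IsTree T) {ζ : Ordinal}
    (h : ζ < treeRank T) : ∃ c, [c] ∈ derivIter T ζ := by
  obtain ⟨w, hw⟩ := derivIter_nonempty_of_lt_treeRank h
  have hne : [] ≠ w := by rintro rfl; exact hT.1 (derivIter_subset T ζ hw)
  simpa using (prefixClosed_derivIter hT.2 ζ).exists_append_singleton_mem hw List.nil_prefix hne

theorem exists_maxNodes_prefix_of_notMem_derivIter {ξ : Ordinal} :
    ∀ {w : List Λ}, w ∈ T → w ∉ derivIter T ξ → ∃ t ∈ maxNodes T, w <+: t := by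
  induction ξ using Ordinal.limitRecOn with
  | zero => intro w hw hξ; rw [derivIter_zero] at hξ; exact absurd hw hξ
  | add_one η ih =>
    intro w hw hξ
    rw [derivIter_add_one] at hξ
    by_cases hη : w ∉ derivIter T η
    · exact ih hw hη
    have hwη : w ∈ maxNodes (derivIter T η) := by_contra fun h => hξ ⟨not_not.mp hη, h⟩
    by_cases hmax : w ∈ maxNodes T
    · exact ⟨w, hmax, List.prefix_refl w⟩
    have : ¬ ∀ v ∈ T, w <+: v → v = w := fun h => hmax ⟨hw, h⟩
    push Not at this
    obtain ⟨v, hv, hwv, hvw⟩ := this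
    have hvη : v ∉ derivIter T η := fun hvη => hvw (hwη.2 v hvη hwv)
    obtain ⟨t, ht, hvt⟩ := ih hv hvη
    exact ⟨t, ht, hwv.trans hvt⟩
  | limit o ho ih =>
    intro w hw hξ
    rw [derivIter_limit T ho, Set.mem_iInter, not_forall] at hξ
    obtain ⟨⟨ζ, hζ⟩, hwζ⟩ := hξ
    exact ih ζ hζ hw hwζ

theorem exists_maxNodes_prefix (hwf : ∃ ξ : Ordinal, derivIter T ξ = ∅) {w : List Λ}
    (hw : w ∈ T) : ∃ t ∈ maxNodes T, w <+: t := by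
  obtain ⟨ξ, hξ⟩ := hwf
  exact exists_maxNodes_prefix_of_notMem_derivIter hw (hξ ▸ Set.notMem_empty w)

theorem mem_maxNodes_TD_of_map_fst {D : Type*} {t : List (Λ × D)}
    (ht : t.map Prod.fst ∈ maxNodes T) : t ∈ maxNodes (TD T D) := by
  refine ⟨ht.1, fun s hs hts => ?_⟩
  have hfst : s.map Prod.fst = t.map Prod.fst := ht.2 _ hs (hts.map Prod.fst)
  exact (hts.eq_of_length (by simpa using congrArg List.length hfst.symm)).symm

theorem exists_maxNodes_TD_prefix {D : Type*} [Nonempty D]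
    (hwf : ∃ ξ : Ordinal, derivIter T ξ = ∅) {s : List (Λ × D)} {w : List Λ} (hw : w ∈ T)
    (hsw : s.map Prod.fst <+: w) : ∃ t ∈ maxNodes (TD T D), s <+: t := by
  obtain ⟨v, hv, hwv⟩ := exists_maxNodes_prefix hwf hw
  obtain ⟨tail, htail⟩ := hsw.trans hwv
  obtain ⟨u⟩ := ‹Nonempty D›
  refine ⟨s ++ tail.map (·, u), mem_maxNodes_TD_of_map_fst ?_, List.prefix_append _ _⟩
  simpa [Function.comp_def, htail] using hv

end Trees

theorem netFilter_neBot {D : Type*} [Nonempty D] {r : D → D → Prop} (hr : IsDirSys r) :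
    (netFilter r).NeBot := by
  refine Filter.iInf_neBot_of_directed (fun a b => ?_) fun a => principal_neBot_iff.mpr ⟨a, hr.1 a⟩
  obtain ⟨c, hac, hbc⟩ := hr.2.2 a b
  exact ⟨c, principal_mono.mpr fun x hx => hr.2.1 a c x hac hx,
    principal_mono.mpr fun x hx => hr.2.1 b c x hbc hx⟩

section Szlenk

variable {E F : Type*} [NormedAddCommGroup E] [NormedSpace ℝ E]
  [NormedAddCommGroup F] [NormedSpace ℝ F] (B : E →L[ℝ] F)

theorem szDerivB_subset (K : Set (WeakDual ℝ F)) (ε : ℝ) : szDerivB B K ε ⊆ K :=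
  fun _ hf => hf.1

theorem isClosed_szDerivB {K : Set (WeakDual ℝ F)} (hK : IsClosed K) (ε : ℝ) :
    IsClosed (szDerivB B K ε) := by
  refine isClosed_of_closure_subset fun f hf => ⟨hK.closure_subset_iff.mpr
    (szDerivB_subset B K ε) hf, fun V hV => ?_⟩
  obtain ⟨U, hUV, hU, hfU⟩ := mem_nhds_iff.mp hV
  obtain ⟨f', hf'U, hf'⟩ := mem_closure_iff.mp hf U hU hfU
  obtain ⟨g, hg, h, hh, hgh⟩ := hf'.2 U (hU.mem_nhds hf'U)
  exact ⟨g, ⟨hUV hg.1, hg.2⟩, h, ⟨hUV hh.1, hh.2⟩, hgh⟩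

variable {K : Set (WeakDual ℝ F)} {ε : ℝ}

theorem szDerivBIter_zero : szDerivBIter B K ε 0 = K :=
  transfiniteIter_zero _ _

theorem szDerivBIter_add_one (ξ : Ordinal) :
    szDerivBIter B K ε (ξ + 1) = szDerivB B (szDerivBIter B K ε ξ) ε :=
  transfiniteIter_add_one _ _ _

theorem szDerivBIter_limit {o : Ordinal} (ho : Order.IsSuccLimit o) :
    szDerivBIter B K ε o = ⋂ ζ : Set.Iio o, szDerivBIter B K ε ζ :=
  transfiniteIter_limit _ _ ho

theorem szDerivBIter_anti {ζ ξ : Ordinal} (h : ζ ≤ ξ) :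
    szDerivBIter B K ε ξ ⊆ szDerivBIter B K ε ζ :=
  transfiniteIter_anti K (fun S => szDerivB_subset B S ε) h

theorem isClosed_szDerivBIter (hK : IsClosed K) (ξ : Ordinal) :
    IsClosed (szDerivBIter B K ε ξ) :=
  transfiniteIter_induction _ K hK (fun _ hA => isClosed_szDerivB B hA ε)
    (fun _ _ hA => isClosed_iInter hA) ξ

theorem isCompact_szDerivBIter (hK : IsCompact K) (ξ : Ordinal) :
    IsCompact (szDerivBIter B K ε ξ) :=
  hK.of_isClosed_subset (isClosed_szDerivBIter B hK.isClosed ξ)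
    (transfiniteIter_subset K (fun S => szDerivB_subset B S ε) ξ)

theorem nonempty_inter_szDerivBIter_of_isSuccLimit (hK : IsCompact K)
    {C : Set (WeakDual ℝ F)} (hC : IsClosed C) {o : Ordinal} (ho : Order.IsSuccLimit o)
    (h : ∀ ζ < o, (C ∩ szDerivBIter B K ε ζ).Nonempty) :
    (C ∩ szDerivBIter B K ε o).Nonempty := by
  have : Nonempty (Set.Iio o) := ⟨⟨0, ho.bot_lt⟩⟩
  have hdir : Directed (· ⊇ ·) fun ζ : Set.Iio o => C ∩ szDerivBIter B K ε ζ := fun a b =>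
    ⟨max a b, Set.inter_subset_inter_right _ (szDerivBIter_anti B (le_max_left a b)),
      Set.inter_subset_inter_right _ (szDerivBIter_anti B (le_max_right a b))⟩
  have := IsCompact.nonempty_iInter_of_directed_nonempty_isCompact_isClosed _ hdir
    (fun ζ => h ζ ζ.2) (fun ζ => (isCompact_szDerivBIter B hK ζ).inter_left hC)
    (fun ζ => hC.inter (isClosed_szDerivBIter B hK.isClosed ζ))
  rwa [← Set.inter_iInter, ← szDerivBIter_limit B ho] at this

theorem mem_szDerivB_of_mapClusterPt {ι : Type*} {l : Filter ι} {S : Set (WeakDual ℝ F)}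
    (hS : IsClosed S) {g : ι → WeakDual ℝ F} {x : ι → E} {g₀ : WeakDual ℝ F} {γ γ' : ℝ}
    (hgS : ∀ i, g i ∈ S) (hx : ∀ i, ‖x i‖ ≤ 1) (hgx : ∀ i, γ ≤ g i (B (x i)))
    (hg₀x : Tendsto (fun i => g₀ (B (x i))) l (𝓝 0)) (hγ : γ' < γ)
    (hg₀ : MapClusterPt g₀ l g) : g₀ ∈ szDerivB B S γ' := by
  have hg₀S : g₀ ∈ S := hS.mem_of_mapClusterPt hg₀ (Eventually.of_forall hgS)
  refine ⟨hg₀S, fun V hV => ?_⟩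
  have hsmall : ∀ᶠ i in l, g₀ (B (x i)) < γ - γ' :=
    hg₀x.eventually (gt_mem_nhds (sub_pos.mpr hγ))
  obtain ⟨i, hiV, hi⟩ := ((mapClusterPt_iff_frequently.mp hg₀ V hV).and_eventually hsmall).exists
  refine ⟨g i, ⟨hiV, hgS i⟩, g₀, ⟨mem_of_mem_nhds hV, hg₀S⟩, ?_⟩
  set φ := (WeakDual.toStrongDual (g i)).comp B - (WeakDual.toStrongDual g₀).comp B
  calc γ' < g i (B (x i)) - g₀ (B (x i)) := by linarith [hgx i]
    _ = φ (x i) := rfl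
    _ ≤ ‖φ‖ * ‖x i‖ := (le_abs_self _).trans (φ.le_opNorm _)
    _ ≤ ‖φ‖ := mul_le_of_le_one_right (norm_nonneg φ) (hx i)

end Szlenk

section BranchFunctionals

variable {Λ E F : Type*} [NormedAddCommGroup E] [NormedSpace ℝ E]
  [NormedAddCommGroup F] [NormedSpace ℝ F] {B : E →L[ℝ] F} {T : Set (List Λ)} {D : Type*}
  {r : D → D → Prop} {e : List (Λ × D) → E} {K : Set (WeakDual ℝ F)}
  {f : List (Λ × D) → WeakDual ℝ F} {γ γ' : ℝ}

def branchFunctionals (T : Set (List Λ)) (D : Type*) (f : List (Λ × D) → WeakDual ℝ F)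
    (s : List (Λ × D)) : Set (WeakDual ℝ F) :=
  f '' {t ∈ maxNodes (TD T D) | s <+: t}

theorem branchFunctionals_anti {s s' : List (Λ × D)} (h : s <+: s') :
    branchFunctionals T D f s' ⊆ branchFunctionals T D f s :=
  Set.image_mono fun _ ht => ⟨ht.1, h.trans ht.2⟩

theorem le_of_mem_closure_branchFunctionals
    (hlb : ∀ t ∈ maxNodes (TD T D), ∀ s : List (Λ × D), s ≠ [] → s <+: t → γ ≤ f t (B (e s)))
    {s : List (Λ × D)} (hs : s ≠ []) {g : WeakDual ℝ F}
    (hg : g ∈ closure (branchFunctionals T D f s)) : γ ≤ g (B (e s)) := by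
  refine closure_minimal ?_ (isClosed_le continuous_const (WeakDual.eval_continuous _)) hg
  rintro _ ⟨t, ht, rfl⟩
  exact hlb t ht.1 s hs ht.2

theorem closure_branchFunctionals_inter_szDerivB_nonempty (hr : IsDirSys r) [Nonempty D]
    (he : ∀ t ∈ TD T D, ‖e t‖ ≤ 1) (hwn : WeaklyNullColl T r e)
    (hlb : ∀ t ∈ maxNodes (TD T D), ∀ s : List (Λ × D), s ≠ [] → s <+: t → γ ≤ f t (B (e s)))
    (hγ : γ' < γ) {S : Set (WeakDual ℝ F)} (hS : IsCompact S) {s : List (Λ × D)} {c : Λ}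
    (hc : ∀ u, s ++ [(c, u)] ∈ TD T D)
    (h : ∀ u, (closure (branchFunctionals T D f (s ++ [(c, u)])) ∩ S).Nonempty) :
    (closure (branchFunctionals T D f s) ∩ szDerivB B S γ').Nonempty := by
  have := netFilter_neBot hr
  choose g hgF hgS using h
  obtain ⟨g₀, -, hg₀⟩ := hS.exists_mapClusterPt (f := netFilter r)
    (tendsto_principal.mpr (Eventually.of_forall hgS))
  refine ⟨g₀, isClosed_closure.mem_of_mapClusterPt hg₀ (Eventually.of_forall fun u =>
    closure_mono (branchFunctionals_anti (List.prefix_append _ _)) (hgF u)), ?_⟩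
  exact mem_szDerivB_of_mapClusterPt B hS.isClosed hgS (fun u => he _ (hc u))
    (fun u => le_of_mem_closure_branchFunctionals hlb (by simp) (hgF u))
    (hwn s c hc ((WeakDual.toStrongDual g₀).comp B)) hγ hg₀

theorem closure_branchFunctionals_inter_szDerivBIter_nonempty (hT : PrefixClosed T)
    (hwf : ∃ ξ : Ordinal, derivIter T ξ = ∅) (hr : IsDirSys r) [Nonempty D]
    (he : ∀ t ∈ TD T D, ‖e t‖ ≤ 1) (hwn : WeaklyNullColl T r e) (hK : IsCompact K)
    (hfK : ∀ t ∈ maxNodes (TD T D), f t ∈ K)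
    (hlb : ∀ t ∈ maxNodes (TD T D), ∀ s : List (Λ × D), s ≠ [] → s <+: t → γ ≤ f t (B (e s)))
    (hγ : γ' < γ) (ξ : Ordinal) (s : List (Λ × D)) (hs : ∃ w ∈ T, s.map Prod.fst <+: w)
    (hξ : ∀ ζ < ξ, ∃ c, s.map Prod.fst ++ [c] ∈ derivIter T ζ) :
    (closure (branchFunctionals T D f s) ∩ szDerivBIter B K γ' ξ).Nonempty := by
  induction ξ using Ordinal.limitRecOn generalizing s with
  | zero =>
    obtain ⟨w, hw, hsw⟩ := hs
    obtain ⟨t, ht, hst⟩ := exists_maxNodes_TD_prefix hwf hw hsw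
    refine ⟨f t, subset_closure ⟨t, ⟨ht, hst⟩, rfl⟩, ?_⟩
    rw [szDerivBIter_zero]
    exact hfK t ht
  | add_one η ih =>
    obtain ⟨c, hc⟩ := hξ η (lt_add_one η)
    have hchild (u : D) : (s ++ [(c, u)]).map Prod.fst = s.map Prod.fst ++ [c] := by simp
    rw [szDerivBIter_add_one]
    refine closure_branchFunctionals_inter_szDerivB_nonempty hr he hwn hlb hγ
      (isCompact_szDerivBIter B hK η) (c := c) (fun u => ?_) fun u => ih _ ?_ fun ζ hζ => ?_
    · show (s ++ [(c, u)]).map Prod.fst ∈ T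
      exact hchild u ▸ derivIter_subset T η hc
    · exact ⟨_, derivIter_subset T η hc, (hchild u).symm ▸ List.prefix_refl _⟩
    · exact hchild u ▸ hT.exists_append_singleton_mem_derivIter hc hζ
  | limit o ho ih =>
    exact nonempty_inter_szDerivBIter_of_isSuccLimit B hK isClosed_closure ho fun ζ hζ =>
      ih ζ hζ s hs fun ζ' hζ' => hξ ζ' (hζ'.trans hζ)

end BranchFunctionals

theorem szDerivBIter_nonempty_of_branch_estimates_general {Λ E F : Type*}
    [NormedAddCommGroup E] [NormedSpace ℝ E] [NormedAddCommGroup F] [NormedSpace ℝ F]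
    (T : Set (List Λ)) (hT : IsTree T) (hTne : T.Nonempty)
    (hTwf : ∃ ξ, derivIter T ξ = ∅)
    (B : E →L[ℝ] F) {D : Type} [Nonempty D] (r : D → D → Prop) (hr : IsDirSys r)
    (γ : ℝ) (e : List (Λ × D) → E)
    (he : ∀ t ∈ TD T D, ‖e t‖ ≤ 1) (hwn : WeaklyNullColl T r e)
    (K : Set (WeakDual ℝ F)) (hK : IsCompact K)
    (f : List (Λ × D) → WeakDual ℝ F)
    (hfK : ∀ t ∈ maxNodes (TD T D), f t ∈ K)
    (hlb : ∀ t ∈ maxNodes (TD T D), ∀ s : List (Λ × D), s ≠ [] → s <+: t →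
      γ ≤ f t (B (e s))) :
    ∀ γ' : ℝ, 0 < γ' → γ' < γ → (szDerivBIter B K γ' (treeRank T)).Nonempty := by
  intro γ' _ hγ'
  obtain ⟨w, hw⟩ := hTne
  obtain ⟨g, -, hg⟩ := closure_branchFunctionals_inter_szDerivBIter_nonempty hT.2 hTwf hr he
    hwn hK hfK hlb hγ' (treeRank T) [] ⟨w, hw, List.nil_prefix⟩
    fun ζ hζ => by simpa using hT.exists_singleton_mem_derivIter hζ
  exact ⟨g, hg⟩

/-- a weakly null collection over `T.D` in the unit ball whose branch
functionals stay `≥ γ` forces nonemptiness of the `o(T)`-th `B`-derived set of `K`. -/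
theorem szDerivBIter_nonempty_of_branch_estimates {Λ E F : Type*}
    [NormedAddCommGroup E] [NormedSpace ℝ E] [NormedAddCommGroup F] [NormedSpace ℝ F]
    (T : Set (List Λ)) (hT : IsTree T) (hTne : T.Nonempty)
    (hTwf : ∃ ξ, derivIter T ξ = ∅)
    (B : E →L[ℝ] F) {D : Type} [Nonempty D] (r : D → D → Prop) (hr : IsDirSys r)
    (γ : ℝ) (hγ : 0 < γ) (e : List (Λ × D) → E)
    (he : ∀ t ∈ TD T D, ‖e t‖ ≤ 1) (hwn : WeaklyNullColl T r e)
    (K : Set (WeakDual ℝ F)) (hK : IsCompact K)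
    (f : List (Λ × D) → WeakDual ℝ F)
    (hfK : ∀ t ∈ maxNodes (TD T D), f t ∈ K)
    (hlb : ∀ t ∈ maxNodes (TD T D), ∀ s : List (Λ × D), s ≠ [] → s <+: t →
      γ ≤ f t (B (e s))) :
    ∀ γ' : ℝ, 0 < γ' → γ' < γ → (szDerivBIter B K γ' (treeRank T)).Nonempty :=
  szDerivBIter_nonempty_of_branch_estimates_general T hT hTne hTwf B r hr γ e he hwn K hK f hfK hlb

end PaperAUS
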